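/- arXiv:2409.18030 — 10 statements merged into one kernel-verified Lean document; each statement's English description precedes it below -/
import Mathlib

section
/- Let f ∈ ℤ[X] and let p be a prime number not dividing the leading coefficient of f. Suppose the reduction f̄ of f modulo p factors as f̄ = ∏_{i=1}^{m} g_i with each g_i irreducible in F_p[X]. If a ∈ ℤ[X] divides f, then the degree of a equals Σ_{i∈S} deg(g_i) for some subset S of {1, …, m}. -/
/-!
Since `p` does not divide the leading coefficient of `a`, reduction mod `p` preserves the degree
of `a`. The reduction of `a` divides `∏ gᵢ`, so by unique factorization in `𝔽_p[X]` it is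
associated to a subproduct `∏_{i ∈ S} gᵢ`, whose degree is `∑_{i ∈ S} deg gᵢ`.
-/

open Polynomial

theorem exists_subset_associated_prod_of_dvd_prod {α ι : Type*} [CommMonoidWithZero α]
    [IsCancelMulZero α] [DecompositionMonoid α] [DecidableEq ι] {g : ι → α} (s : Finset ι)
    (hg : ∀ i ∈ s, Irreducible (g i)) {a : α} (ha : a ∣ ∏ i ∈ s, g i) :
    ∃ t ⊆ s, Associated a (∏ i ∈ t, g i) := by
  induction s using Finset.induction_on generalizing a with
  | empty =>
    rw [Finset.prod_empty] at ha
    exact ⟨∅, subset_rfl, by simpa [associated_one_iff_isUnit] using isUnit_of_dvd_one ha⟩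
  | insert j s hj ih =>
    rw [Finset.prod_insert hj] at ha
    have hgj : Irreducible (g j) := hg j (Finset.mem_insert_self j s)
    have hgs : ∀ i ∈ s, Irreducible (g i) := fun i hi ↦ hg i (Finset.mem_insert_of_mem hi)
    by_cases hja : g j ∣ a
    · obtain ⟨b, rfl⟩ := hja
      obtain ⟨t, hts, hbt⟩ := ih hgs ((mul_dvd_mul_iff_left hgj.ne_zero).mp ha)
      refine ⟨insert j t, Finset.insert_subset_insert j hts, ?_⟩
      rw [Finset.prod_insert fun hjt ↦ hj (hts hjt)]
      exact hbt.mul_left (g j)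
    · have hrel : IsRelPrime a (g j) := (hgj.isRelPrime_iff_not_dvd.mpr hja).symm
      obtain ⟨t, hts, hat⟩ := ih hgs (hrel.dvd_of_dvd_mul_left ha)
      exact ⟨t, hts.trans (Finset.subset_insert j s), hat⟩

theorem Polynomial.natDegree_eq_of_associated {R : Type*} [CommRing R] [IsDomain R]
    {p q : R[X]} (h : Associated p q) : p.natDegree = q.natDegree :=
  natDegree_eq_of_degree_eq (degree_eq_degree_of_associated h)

theorem Polynomial.natDegree_map_intCast_zmod_of_not_dvd {p : ℕ} {a : ℤ[X]}
    (ha : ¬ (p : ℤ) ∣ a.leadingCoeff) :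
    (a.map (Int.castRingHom (ZMod p))).natDegree = a.natDegree :=
  natDegree_map_of_leadingCoeff_ne_zero _ <| by
    simpa [ZMod.intCast_zmod_eq_zero_iff_dvd] using ha

/-- If `p` is a prime not dividing the leading coefficient of `f : ℤ[X]` and the
reduction of `f` mod `p` factors as a product of irreducibles `g 1, …, g m` over `F_p`,
then the degree of any divisor `a` of `f` in `ℤ[X]` is a subset sum of the degrees of
the `g i`. -/
theorem natDegree_dvd_eq_subset_sum (f : Polynomial ℤ) (p : ℕ) (hp : p.Prime)
    (hlc : ¬ ((p : ℤ) ∣ f.leadingCoeff))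
    (m : ℕ) (g : Fin m → Polynomial (ZMod p))
    (hirr : ∀ i, Irreducible (g i))
    (hfac : f.map (Int.castRingHom (ZMod p)) = ∏ i, g i)
    (a : Polynomial ℤ) (ha : a ∣ f) :
    ∃ S : Finset (Fin m), a.natDegree = ∑ i ∈ S, (g i).natDegree := by
  have : Fact p.Prime := ⟨hp⟩
  have hla : ¬ (p : ℤ) ∣ a.leadingCoeff := fun h ↦
    hlc (h.trans (leadingCoeff_dvd_leadingCoeff ha))
  have hdvd : a.map (Int.castRingHom (ZMod p)) ∣ ∏ i, g i :=
    hfac ▸ Polynomial.map_dvd _ ha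
  obtain ⟨S, -, hS⟩ :=
    exists_subset_associated_prod_of_dvd_prod Finset.univ (fun i _ ↦ hirr i) hdvd
  refine ⟨S, ?_⟩
  rw [← natDegree_map_intCast_zmod_of_not_dvd hla, natDegree_eq_of_associated hS,
    natDegree_prod _ _ fun i _ ↦ (hirr i).ne_zero]
end

section
/- Let f ∈ ℤ[X] be a primitive polynomial and let p_1, …, p_m be distinct primes not dividing the leading coefficient of f. For each prime p_k, write the reduction of f modulo p_k as a product of irreducible polynomials in F_{p_k}[X], let D_{p_k} be the tuple of their degrees, and let S(D_{p_k}) be the set of all subset sums of D_{p_k}. Let d = min ( ⋂_{k=1}^{m} S(D_{p_k}) \ {0} ). If a ∈ ℤ[X] divides f and a is neither 1 nor −1, then d ≤ deg a. -/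
/-!
Over `𝔽_p` every divisor of `∏ gᵢ` with the `gᵢ` irreducible is, up to a unit, a subproduct, so
its degree is a subset sum of the `deg gᵢ`. If `a ∣ f` in `ℤ[X]`, then `a mod p ∣ f mod p`, and
reduction preserves `deg a` because `lc a ∣ lc f` and `p ∤ lc f`. Hence `deg a` lies in every
`S(D_p)`, and it is nonzero since a constant divisor of a primitive polynomial is a unit.
-/

open Polynomial

namespace Polynomial

theorem exists_subset_natDegree_eq_sum_of_dvd_prod {F ι : Type*} [Field F] {g : ι → F[X]}
    (hg : ∀ i, Irreducible (g i)) {T : Finset ι} {q : F[X]} (hq : q ∣ ∏ i ∈ T, g i) :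
    ∃ S ⊆ T, q.natDegree = ∑ i ∈ S, (g i).natDegree := by
  classical
  induction T using Finset.induction_on generalizing q with
  | empty =>
    exact ⟨∅, subset_rfl, by
      simpa using natDegree_eq_zero_of_isUnit (isUnit_of_dvd_one (by simpa using hq))⟩
  | insert b T hb ih =>
    rw [Finset.prod_insert hb] at hq
    have hq0 : q ≠ 0 := ne_zero_of_dvd_ne_zero
      (mul_ne_zero (hg b).ne_zero (Finset.prod_ne_zero_iff.2 fun i _ ↦ (hg i).ne_zero)) hq
    obtain ⟨q₁, q₂, h₁, h₂, rfl⟩ := exists_dvd_and_dvd_of_dvd_mul hq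
    obtain ⟨hq₁, hq₂⟩ := mul_ne_zero_iff.1 hq0
    obtain ⟨S, hST, hS⟩ := ih h₂
    rw [natDegree_mul hq₁ hq₂, hS]
    rcases (hg b).dvd_iff.1 h₁ with hunit | hassoc
    · exact ⟨S, hST.trans (Finset.subset_insert b T), by
        rw [natDegree_eq_zero_of_isUnit hunit, zero_add]⟩
    · refine ⟨insert b S, Finset.insert_subset_insert b hST, ?_⟩
      rw [Finset.sum_insert fun h ↦ hb (hST h),
        natDegree_eq_of_degree_eq (degree_eq_degree_of_associated hassoc)]

theorem IsPrimitive.natDegree_pos_of_dvd {R : Type*} [CommSemiring R] {f a : R[X]}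
    (hf : f.IsPrimitive) (ha : a ∣ f) (hunit : ¬ IsUnit a) : 0 < a.natDegree := by
  refine Nat.pos_of_ne_zero fun h ↦ hunit ?_
  rw [eq_C_of_natDegree_eq_zero h] at ha ⊢
  exact (hf _ ha).map C

theorem natDegree_map_of_dvd {R S : Type*} [CommSemiring R] [NoZeroDivisors R] [Semiring S]
    (φ : R →+* S) {a f : R[X]} (ha : a ∣ f) (hf : φ f.leadingCoeff ≠ 0) :
    (a.map φ).natDegree = a.natDegree := by
  obtain ⟨b, rfl⟩ := ha
  refine natDegree_map_of_leadingCoeff_ne_zero φ fun h ↦ hf ?_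
  rw [leadingCoeff_mul, map_mul, h, zero_mul]

end Polynomial

theorem min_subset_sum_le_natDegree_of_dvd_general
    (f : Polynomial ℤ) (hf : f.IsPrimitive)
    (m : ℕ) (p : Fin m → ℕ) (hp : ∀ k, (p k).Prime)
    (hlc : ∀ k, ¬ ((p k : ℤ) ∣ f.leadingCoeff))
    (t : Fin m → ℕ) (g : (k : Fin m) → Fin (t k) → Polynomial (ZMod (p k)))
    (hirr : ∀ k i, Irreducible (g k i))
    (hfac : ∀ k, f.map (Int.castRingHom (ZMod (p k))) = ∏ i, g k i)
    (d : ℕ)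
    (hd : IsLeast
      ({ c | ∀ k, ∃ S : Finset (Fin (t k)), c = ∑ i ∈ S, (g k i).natDegree } \ {0}) d)
    (a : Polynomial ℤ) (ha : a ∣ f) (ha1 : a ≠ 1) (haneg : a ≠ -1) :
    d ≤ a.natDegree := by
  have hunit : ¬ IsUnit a := by
    intro hu
    obtain ⟨r, hr, rfl⟩ := isUnit_iff.1 hu
    rcases Int.isUnit_iff.1 hr with rfl | rfl <;> simp_all
  refine hd.2 ⟨fun k ↦ ?_, (hf.natDegree_pos_of_dvd ha hunit).ne'⟩
  have : Fact (p k).Prime := ⟨hp k⟩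
  have hlc' : Int.castRingHom (ZMod (p k)) f.leadingCoeff ≠ 0 := by
    simpa [ZMod.intCast_zmod_eq_zero_iff_dvd] using hlc k
  obtain ⟨S, -, hS⟩ := exists_subset_natDegree_eq_sum_of_dvd_prod (hirr k)
    (hfac k ▸ map_dvd (Int.castRingHom (ZMod (p k))) ha)
  exact ⟨S, by rw [← natDegree_map_of_dvd _ ha hlc', hS]⟩

/-- **Degree analysis.** Let `f : ℤ[X]` be primitive, and `p 1, …, p m` distinct primes
not dividing the leading coefficient of `f`. Suppose the reduction of `f` modulo `p k`
factors into irreducibles `g k 1, …, g k (t k)` over `F_(p k)`. Let `d` be the least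
element of the intersection over `k` of the sets of nonzero subset sums of the degrees
of the `g k i`. If `a ∣ f` and `a` is neither `1` nor `-1`, then `d ≤ deg a`. -/
theorem min_subset_sum_le_natDegree_of_dvd
    (f : Polynomial ℤ) (hf : f.IsPrimitive)
    (m : ℕ) (p : Fin m → ℕ) (hp : ∀ k, (p k).Prime)
    (hdist : Function.Injective p)
    (hlc : ∀ k, ¬ ((p k : ℤ) ∣ f.leadingCoeff))
    (t : Fin m → ℕ) (g : (k : Fin m) → Fin (t k) → Polynomial (ZMod (p k)))
    (hirr : ∀ k i, Irreducible (g k i))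
    (hfac : ∀ k, f.map (Int.castRingHom (ZMod (p k))) = ∏ i, g k i)
    (d : ℕ)
    (hd : IsLeast
      ({ c | ∀ k, ∃ S : Finset (Fin (t k)), c = ∑ i ∈ S, (g k i).natDegree } \ {0}) d)
    (a : Polynomial ℤ) (ha : a ∣ f) (ha1 : a ≠ 1) (haneg : a ≠ -1) :
    d ≤ a.natDegree :=
  min_subset_sum_le_natDegree_of_dvd_general f hf m p hp hlc t g hirr hfac d hd a ha ha1 haneg
end

section
/- Let f be a non-constant polynomial in ℤ[X]. Suppose d ≥ 1 is an integer such that every non-unit divisor of f in ℤ[X] has degree at least d. Let ρ be a real number such that |α| ≤ ρ for every complex root α of f. If there exists m ∈ ℤ with |m| ≥ ρ + 1 and |f(m)| = s·P, where s is an integer with s < (|m| − ρ)^d and P is a prime number, then f is irreducible in ℤ[X]. -/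
/-!
If `f = a * b` with neither factor a unit, both factors have degree at least `d`. Every complex
root `r` of a divisor `a` is a root of `f`, so `|m - r| ≥ |m| - ρ ≥ 1`; factoring `a` over `ℂ`
and using that its leading coefficient is a nonzero integer gives `|a(m)| ≥ (|m| - ρ) ^ deg a`.
The prime `P` divides `a(m)` or `b(m)`, say `a(m)`; as `a(m) ≠ 0`, `|a(m)| ≥ P`, hence
`|b(m)| ≤ s < (|m| - ρ) ^ d ≤ |b(m)|`.
-/

open Polynomial

theorem Polynomial.norm_leadingCoeff_mul_pow_le_norm_eval {K : Type*} [NormedField K]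
    [IsAlgClosed K] {p : K[X]} {z : K} {c : ℝ} (hc : 0 ≤ c)
    (h : ∀ r ∈ p.roots, c ≤ ‖z - r‖) :
    ‖p.leadingCoeff‖ * c ^ p.natDegree ≤ ‖p.eval z‖ := by
  have hprod : c ^ p.natDegree ≤ (p.roots.map (‖z - ·‖)).prod := by
    rw [← IsAlgClosed.card_roots_eq_natDegree, ← Multiset.prod_replicate, ← Multiset.map_const']
    exact Multiset.prod_map_le_prod_map₀ _ _ (fun _ _ => hc) h
  rw [(IsAlgClosed.splits p).eval_eq_prod_roots, norm_mul]
  have hnorm : ‖(p.roots.map (z - ·)).prod‖ = (p.roots.map (‖z - ·‖)).prod := by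
    simpa [Multiset.map_map] using map_multiset_prod (normHom : K →*₀ ℝ) (p.roots.map (z - ·))
  rw [hnorm]
  exact mul_le_mul_of_nonneg_left hprod (norm_nonneg _)

theorem Polynomial.pow_natDegree_le_abs_eval_of_dvd {f a : ℤ[X]} (hf : f ≠ 0) (ha : a ∣ f)
    {ρ : ℝ} (hρ : ∀ α : ℂ, (f.map (Int.castRingHom ℂ)).IsRoot α → ‖α‖ ≤ ρ)
    {m : ℤ} (hm : ρ ≤ |(m : ℝ)|) :
    (|(m : ℝ)| - ρ) ^ a.natDegree ≤ |((a.eval m : ℤ) : ℝ)| := by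
  have ha0 : a ≠ 0 := ne_zero_of_dvd_ne_zero hf ha
  have hroots : ∀ r ∈ (a.map (Int.castRingHom ℂ)).roots, |(m : ℝ)| - ρ ≤ ‖(m : ℂ) - r‖ := by
    intro r hr
    have hf' : f.map (Int.castRingHom ℂ) ≠ 0 := (Polynomial.map_ne_zero_iff Int.cast_injective).2 hf
    have hrf := Multiset.mem_of_le (roots.le_of_dvd hf' (map_dvd _ ha)) hr
    have := norm_sub_norm_le (m : ℂ) r
    rw [Complex.norm_intCast] at this
    linarith [hρ r (isRoot_of_mem_roots hrf)]
  have hlc : (1 : ℝ) ≤ ‖(a.map (Int.castRingHom ℂ)).leadingCoeff‖ := by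
    rw [leadingCoeff_map_of_injective Int.cast_injective, eq_intCast, Complex.norm_intCast,
      ← Int.cast_abs]
    exact_mod_cast Int.one_le_abs (leadingCoeff_ne_zero.2 ha0)
  have heval := norm_leadingCoeff_mul_pow_le_norm_eval (sub_nonneg.2 hm) hroots
  rw [natDegree_map_eq_of_injective Int.cast_injective, eval_intCast_map, eq_intCast,
    Complex.norm_intCast] at heval
  exact (le_mul_of_one_le_left (pow_nonneg (sub_nonneg.2 hm) _) hlc).trans heval

theorem Int.abs_le_of_abs_mul_eq_mul_of_dvd {x y s p : ℤ} (hp : 0 < p) (hx : x ≠ 0)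
    (hpx : p ∣ x) (h : |x * y| = s * p) : |y| ≤ s := by
  have hpx' : p ≤ |x| := Int.le_of_dvd (abs_pos.2 hx) ((dvd_abs p x).2 hpx)
  rw [abs_mul] at h
  nlinarith [abs_nonneg y]

theorem irreducible_of_large_prime_factor_witness_general
    (f : Polynomial ℤ) (hf : 0 < f.natDegree)
    (d : ℕ)
    (hdeg : ∀ a : Polynomial ℤ, a ∣ f → a ≠ 1 → a ≠ -1 → d ≤ a.natDegree)
    (ρ : ℝ) (hρ : ∀ α : ℂ, (f.map (Int.castRingHom ℂ)).IsRoot α → ‖α‖ ≤ ρ)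
    (m : ℤ) (hm : ρ + 1 ≤ |(m : ℝ)|)
    (s : ℤ) (P : ℕ) (hP : P.Prime)
    (hfm : |f.eval m| = s * (P : ℤ))
    (hs : (s : ℝ) < (|(m : ℝ)| - ρ) ^ d) :
    Irreducible f := by
  have hf0 : f ≠ 0 := ne_zero_of_natDegree_gt hf
  have hbound := fun g (hg : g ∣ f) =>
    pow_natDegree_le_abs_eval_of_dvd hf0 hg hρ (m := m) (by linarith)
  have hne : ∀ g, g ∣ f → g.eval m ≠ 0 := fun g hg h0 => by
    have := (pow_pos (by linarith : (0 : ℝ) < |(m : ℝ)| - ρ) g.natDegree).trans_le (hbound g hg)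
    simp [h0] at this
  have hlarge : ∀ g, g ∣ f → ¬IsUnit g → s < |g.eval m| := fun g hg hu => by
    have hd := hdeg g hg (by rintro rfl; exact hu isUnit_one)
      (by rintro rfl; exact hu isUnit_one.neg)
    exact_mod_cast hs.trans_le ((pow_le_pow_right₀ (by linarith) hd).trans (hbound g hg))
  have hsmall : ∀ g h, f = g * h → (P : ℤ) ∣ g.eval m → |h.eval m| ≤ s := fun g h hgh hPg =>
    Int.abs_le_of_abs_mul_eq_mul_of_dvd (by exact_mod_cast hP.pos) (hne g ⟨h, hgh⟩) hPg
      (by rw [← eval_mul, ← hgh, hfm])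
  refine irreducible_iff.2 ⟨not_isUnit_of_natDegree_pos f hf, fun a b hab => ?_⟩
  by_contra! ⟨ha, hb⟩
  have hPab : (P : ℤ) ∣ a.eval m * b.eval m := by
    rw [← eval_mul, ← hab, ← dvd_abs, hfm]; exact dvd_mul_left _ _
  rcases (Nat.prime_iff_prime_int.1 hP).dvd_mul.1 hPab with hPa | hPb
  · exact (hsmall a b hab hPa).not_gt (hlarge b ⟨a, by rw [hab, mul_comm]⟩ hb)
  · exact (hsmall b a (hab.trans (mul_comm a b)) hPb).not_gt (hlarge a ⟨b, hab⟩ ha)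

/-- **Large prime factor witness (LPFW) irreducibility criterion.** Let `f : ℤ[X]` be
non-constant, `d ≥ 1` a lower bound for the degree of every non-unit divisor of `f`,
and `ρ` an upper bound on the absolute values of the complex roots of `f`.
If `m : ℤ` satisfies `|m| ≥ ρ + 1` and `|f(m)| = s * P` with `s` an integer satisfying
`s < (|m| - ρ) ^ d` and `P` prime, then `f` is irreducible. -/
theorem irreducible_of_large_prime_factor_witness
    (f : Polynomial ℤ) (hf : 0 < f.natDegree)
    (d : ℕ) (hd : 1 ≤ d)
    (hdeg : ∀ a : Polynomial ℤ, a ∣ f → a ≠ 1 → a ≠ -1 → d ≤ a.natDegree)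
    (ρ : ℝ) (hρ : ∀ α : ℂ, (f.map (Int.castRingHom ℂ)).IsRoot α → ‖α‖ ≤ ρ)
    (m : ℤ) (hm : ρ + 1 ≤ |(m : ℝ)|)
    (s : ℤ) (P : ℕ) (hP : P.Prime)
    (hfm : |f.eval m| = s * (P : ℤ))
    (hs : (s : ℝ) < (|(m : ℝ)| - ρ) ^ d) :
    Irreducible f :=
  irreducible_of_large_prime_factor_witness_general f hf d hdeg ρ hρ m hm s P hP hfm hs
end

section
/- Let p be a prime and let f ∈ F_p[X] have degree n > 0. Let (b_i)_{i=0}^{s} (each b_i ∈ {0,1}) be the binary digits of p, so p = Σ_{i=0}^{s} b_i·2^i. Suppose we are given polynomials h_0, …, h_n in F_p[X], an n×s matrix (g_{ij}) over F_p[X], an n×(s+1) matrix (h′_{ij}) over F_p[X], and tuples (a_0, …, a_{n−1}) and (b′_0, …, b′_{n−1}) over F_p[X] satisfying: (i) for all 0 ≤ i < n, h′_{is} = h_i^(b_s) and h′_{i0} = h_{i+1}; (ii) for all 0 ≤ i < n and 0 ≤ j < s, f·g_{ij} = (h′_{i(j+1)})^2 · h_i^(b_j) − h′_{ij}; (iii)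 h_0 = X and h_n = X; (iv) for every prime t dividing n, a_{n/t}·f + b′_{n/t}·(h_{n/t} − X) = 1. Then f is irreducible in F_p[X]. -/
/-!
Reducing modulo `f`, conditions (i)–(ii) say that the square-and-multiply chain computes
`h (i + 1) ≡ h i ^ p`, so with (iii) `h i ≡ X ^ p ^ i (mod f)` for `i ≤ n`. Hence
`f ∣ X ^ p ^ n - X` and, by (iv), `f` is coprime to `X ^ p ^ (n / t) - X` for every prime `t ∣ n`.
This is Rabin's test: every irreducible factor `g` of `f` divides `X ^ p ^ n - X`, so its degree
`d` divides `n`; if `d < n`, then `d ∣ n / t` for a prime `t ∣ n / d`, so `g` also divides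
`X ^ p ^ (n / t) - X`, contradicting coprimality. Thus `f` has an irreducible factor of full degree.
-/

open Polynomial

theorem pow_sum_mul_two_pow_of_square_mul {M : Type*} [Monoid M] (x : M) (s : ℕ) (b : ℕ → ℕ)
    (y : ℕ → M) (hs : y s = x ^ b s) (hstep : ∀ j < s, y j = y (j + 1) ^ 2 * x ^ b j) :
    y 0 = x ^ ∑ i ∈ Finset.range (s + 1), b i * 2 ^ i := by
  induction s generalizing b y with
  | zero => simpa using hs
  | succ s ih =>
    have htail : y 1 = x ^ ∑ i ∈ Finset.range (s + 1), b (i + 1) * 2 ^ i :=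
      ih (b ·.succ) (y ·.succ) hs fun j hj => hstep (j + 1) (by omega)
    rw [hstep 0 s.succ_pos, htail, ← pow_mul, ← pow_add,
      Finset.sum_range_succ' (fun i => b i * 2 ^ i), Finset.sum_mul]
    simp only [pow_succ, mul_assoc, pow_zero, mul_one]

theorem eq_pow_pow_of_succ_eq_pow {M : Type*} [Monoid M] {z : ℕ → M} {p n : ℕ}
    (hstep : ∀ i < n, z (i + 1) = z i ^ p) : ∀ i ≤ n, z i = z 0 ^ p ^ i
  | 0, _ => by rw [pow_zero, pow_one]
  | i + 1, hi => by
    rw [hstep i hi, eq_pow_pow_of_succ_eq_pow hstep i (by omega), ← pow_mul, pow_succ]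

namespace Polynomial

theorem irreducible_of_dvd_X_pow_card_pow_sub_X_of_isCoprime {k : Type*} [Field k] [Finite k]
    {f : k[X]} (hf : 0 < f.natDegree) (hdvd : f ∣ X ^ Nat.card k ^ f.natDegree - X)
    (hcop : ∀ t : ℕ, t.Prime → t ∣ f.natDegree →
      IsCoprime f (X ^ Nat.card k ^ (f.natDegree / t) - X)) :
    Irreducible f := by
  obtain ⟨g, hg, hgf⟩ := exists_irreducible_of_natDegree_pos hf
  obtain ⟨m, hm⟩ := hg.natDegree_dvd_of_dvd_X_pow_card_pow_sub_X (hgf.trans hdvd)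
  have hfg : f.natDegree ≤ g.natDegree := by
    by_contra! hlt
    obtain ⟨t, ht, htm⟩ := Nat.exists_prime_and_dvd (n := m) (by rintro rfl; omega)
    have hgt : g ∣ X ^ Nat.card k ^ (f.natDegree / t) - X := by
      rw [← hg.natDegree_dvd_iff_dvd_X_pow_card_pow_sub_X, hm, Nat.mul_div_assoc _ htm]
      exact dvd_mul_right _ _
    exact hg.not_isUnit <|
      (hcop t ht (hm ▸ dvd_mul_of_dvd_right htm _)).isUnit_of_dvd' hgf hgt
  exact (associated_of_dvd_of_natDegree_le hgf (ne_zero_of_natDegree_gt hf) hfg).irreducible hg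

end Polynomial

open AdjoinRoot in
theorem irreducible_of_certificate_general (p : ℕ) [Fact p.Prime]
    (f : Polynomial (ZMod p)) (hn : 0 < f.natDegree)
    (s : ℕ) (b : ℕ → ℕ)
    (hp : p = ∑ i ∈ Finset.range (s + 1), b i * 2 ^ i)
    (h : ℕ → Polynomial (ZMod p))
    (h' : ℕ → ℕ → Polynomial (ZMod p))
    (g : ℕ → ℕ → Polynomial (ZMod p))
    (a b' : ℕ → Polynomial (ZMod p))
    -- (i)
    (hi : ∀ i < f.natDegree, h' i s = (h i) ^ (b s) ∧ h' i 0 = h (i + 1))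
    -- (ii)
    (hii : ∀ i < f.natDegree, ∀ j < s,
      f * g i j = (h' i (j + 1)) ^ 2 * (h i) ^ (b j) - h' i j)
    -- (iii)
    (hiii : h 0 = X ∧ h f.natDegree = X)
    -- (iv)
    (hiv : ∀ t : ℕ, t.Prime → t ∣ f.natDegree →
      a (f.natDegree / t) * f + b' (f.natDegree / t) * (h (f.natDegree / t) - X) = 1) :
    Irreducible f := by
  have hfrob : ∀ i < f.natDegree, mk f (h (i + 1)) = mk f (h i) ^ p := fun i hi_lt => by
    have hchain := pow_sum_mul_two_pow_of_square_mul (mk f (h i)) s b (mk f <| h' i ·)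
      (by rw [(hi i hi_lt).1, map_pow]) fun j hj => by
        rw [← map_pow, ← map_pow, ← map_mul]
        exact (mk_eq_mk.2 ⟨g i j, (hii i hi_lt j hj).symm⟩).symm
    rwa [← hp, (hi i hi_lt).2] at hchain
  have hdvd : ∀ i ≤ f.natDegree, f ∣ h i - X ^ p ^ i := fun i hi_le => by
    rw [← mk_eq_mk, eq_pow_pow_of_succ_eq_pow (z := (mk f <| h ·)) hfrob i hi_le, hiii.1, map_pow]
  refine irreducible_of_dvd_X_pow_card_pow_sub_X_of_isCoprime hn ?_ fun t ht htn => ?_ <;>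
    rw [Nat.card_zmod]
  · have hdvd_n := hdvd _ le_rfl
    rw [hiii.2] at hdvd_n
    exact dvd_sub_comm.1 hdvd_n
  · obtain ⟨c, hc⟩ := hdvd _ (Nat.div_le_self f.natDegree t)
    have hcop : IsCoprime f (h (f.natDegree / t) - X) := ⟨_, _, hiv t ht htn⟩
    have hsplit : X ^ p ^ (f.natDegree / t) - X = h (f.natDegree / t) - X + f * -c := by
      linear_combination -hc
    exact hsplit ▸ hcop.add_mul_left_right _

/-- **Soundness of the irreducibility certificate over `F_p`.** Given the certifying
data `h`, `h'`, `g`, `a`, `b'` satisfying the verification conditions (i)–(iv),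
the polynomial `f : (ZMod p)[X]` of degree `n > 0` is irreducible. -/
theorem irreducible_of_certificate (p : ℕ) [Fact p.Prime]
    (f : Polynomial (ZMod p)) (hn : 0 < f.natDegree)
    (s : ℕ) (b : ℕ → ℕ) (hb : ∀ i ≤ s, b i = 0 ∨ b i = 1)
    (hp : p = ∑ i ∈ Finset.range (s + 1), b i * 2 ^ i)
    (h : ℕ → Polynomial (ZMod p))
    (h' : ℕ → ℕ → Polynomial (ZMod p))
    (g : ℕ → ℕ → Polynomial (ZMod p))
    (a b' : ℕ → Polynomial (ZMod p))
    -- (i)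
    (hi : ∀ i < f.natDegree, h' i s = (h i) ^ (b s) ∧ h' i 0 = h (i + 1))
    -- (ii)
    (hii : ∀ i < f.natDegree, ∀ j < s,
      f * g i j = (h' i (j + 1)) ^ 2 * (h i) ^ (b j) - h' i j)
    -- (iii)
    (hiii : h 0 = X ∧ h f.natDegree = X)
    -- (iv)
    (hiv : ∀ t : ℕ, t.Prime → t ∣ f.natDegree →
      a (f.natDegree / t) * f + b' (f.natDegree / t) * (h (f.natDegree / t) - X) = 1) :
    Irreducible f :=
  irreducible_of_certificate_general p f hn s b hp h h' g a b' hi hii hiii hiv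
end

section
/- Let K be a commutative ring that is torsion-free as a ℤ-module, and let 𝒪 ⊆ 𝒪_m be ℤ-subalgebras of K such that 𝒪_m is free and finite as a ℤ-module and 𝒪 and 𝒪_m have equal rank as ℤ-modules. Let p be a prime number and let I_p be the radical of the principal ideal p𝒪 of 𝒪. If 𝒪 is equal to the multiplier ring r(I_p) = {x ∈ K | for every i ∈ I_p there exists j ∈ I_p with i·x = j in K}, then p does not divide the index of 𝒪 in 𝒪_m, i.e., p does not divide the cardinality of the quotient ℤ-module 𝒪_m / 𝒪. -/
set_option maxHeartbeats 1600000 in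
/-- **Pohst–Zassenhaus.** Let `K` be a `ℤ`-torsion-free commutative ring,
`𝒪 ≤ 𝒪m` subalgebras of `K` with `𝒪m` free and finite as a `ℤ`-module and with
equal `ℤ`-rank. Let `p` be a prime and `Ip` the radical of the ideal `p𝒪`. If `𝒪`
equals the multiplier ring `{x ∈ K | x · Ip ⊆ Ip}`, then `p` does not divide the
index `[𝒪m : 𝒪]`, i.e. the cardinality of the quotient `ℤ`-module `𝒪m / 𝒪`. -/
theorem piMaximal_of_eq_multiplierRing
    {K : Type*} [CommRing K] [NoZeroSMulDivisors ℤ K]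
    (O Om : Subalgebra ℤ K) (hm : O ≤ Om)
    [Module.Free ℤ Om] [Module.Finite ℤ Om]
    (hrank : Module.rank ℤ O = Module.rank ℤ Om)
    (p : ℕ) (hp : p.Prime)
    (heq : (O : Set K) =
      { x : K | ∀ i : O, i ∈ (Ideal.span {(p : O)}).radical →
          ∃ j : O, j ∈ (Ideal.span {(p : O)}).radical ∧ (i : K) * x = (j : K) }) :
    ¬ (p ∣ Nat.card
        (Om ⧸ Subalgebra.toSubmodule (Subalgebra.inclusion hm).range)) := by
  intro hdvd
  classical
  set S : Submodule ℤ Om := Subalgebra.toSubmodule (Subalgebra.inclusion hm).range with hS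
  -- membership in `S` is membership of the underlying element in `O`
  have hmemS : ∀ z : Om, z ∈ S ↔ (z : K) ∈ O := by
    intro z
    rw [hS, Subalgebra.mem_toSubmodule, AlgHom.mem_range]
    constructor
    · rintro ⟨w, rfl⟩
      simpa [Subalgebra.coe_inclusion] using w.2
    · intro hz
      exact ⟨⟨(z : K), hz⟩, Subtype.ext (by simp [Subalgebra.coe_inclusion])⟩
  -- a linear equivalence between `O` and `S`
  have hinj : Function.Injective ((Subalgebra.inclusion hm).toLinearMap) :=
    Subalgebra.inclusion_injective hm
  have hrangeS : LinearMap.range (Subalgebra.inclusion hm).toLinearMap = S := by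
    ext z
    rw [LinearMap.mem_range, hmemS]
    constructor
    · rintro ⟨w, rfl⟩
      simpa [Subalgebra.coe_inclusion] using w.2
    · intro hz
      exact ⟨⟨(z : K), hz⟩, Subtype.ext (by simp [Subalgebra.coe_inclusion])⟩
  let eOS : O ≃ₗ[ℤ] S :=
    (LinearEquiv.ofInjective _ hinj).trans (LinearEquiv.ofEq _ _ hrangeS)
  -- the quotient is finite
  haveI : IsNoetherian ℤ Om := isNoetherian_of_isNoetherianRing_of_finite ℤ Om
  haveI : Module.Finite ℤ S := Module.Finite.iff_fg.mpr (IsNoetherian.noetherian S)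
  have hrankS : Module.rank ℤ S = Module.rank ℤ Om := by
    rw [← eOS.rank_eq]; exact hrank
  have hQ0 : Module.rank ℤ (Om ⧸ S) = 0 := by
    have h1 := rank_quotient_add_rank_le S
    rw [hrankS] at h1
    have hb : Module.rank ℤ Om < Cardinal.aleph0 := Module.rank_lt_aleph0 ℤ Om
    have ha : Module.rank ℤ (Om ⧸ S) < Cardinal.aleph0 :=
      lt_of_le_of_lt (le_trans (le_self_add) h1) hb
    obtain ⟨n, hn⟩ := Cardinal.lt_aleph0.mp ha
    obtain ⟨k, hk⟩ := Cardinal.lt_aleph0.mp hb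
    rw [hn, hk, ← Nat.cast_add, Nat.cast_le] at h1
    rw [hn]
    norm_cast
    omega
  have htors : Module.IsTorsion ℤ (Om ⧸ S) := rank_eq_zero_iff_isTorsion.mp hQ0
  haveI : Finite (Om ⧸ S) := Module.finite_of_fg_torsion _ htors
  -- Cauchy: an element of additive order `p` in the quotient
  haveI : Fintype (Om ⧸ S) := Fintype.ofFinite _
  haveI : Fact p.Prime := ⟨hp⟩
  obtain ⟨q, hq⟩ := exists_prime_addOrderOf_dvd_card (G := Om ⧸ S) p
    (by rwa [← Nat.card_eq_fintype_card])
  have hq0 : q ≠ 0 := by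
    intro h
    rw [h, addOrderOf_zero] at hq
    exact hp.one_lt.ne hq
  have hpq : (p : ℤ) • q = 0 := by
    have := addOrderOf_nsmul_eq_zero q
    rw [hq] at this
    rw [natCast_zsmul]
    exact this
  obtain ⟨x, rfl⟩ := Submodule.Quotient.mk_surjective S q
  have hxS : x ∉ S := fun h => hq0 ((Submodule.Quotient.mk_eq_zero S).mpr h)
  have hpxS : (p : ℤ) • x ∈ S := by
    rwa [← Submodule.Quotient.mk_smul, Submodule.Quotient.mk_eq_zero] at hpq
  -- translate to `K`
  have hpO : (p : K) ∈ O := by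
    have := O.algebraMap_mem (p : ℤ)
    simpa using this
  have hpowO : ∀ k : ℕ, (p : K) ^ k ∈ O := fun k => pow_mem hpO k
  have hOsmul : ∀ (n : ℤ) {z : K}, z ∈ O → n • z ∈ O := fun n {z} hz =>
    (Subalgebra.toSubmodule O).smul_mem n hz
  have hOmsmul : ∀ (n : ℤ) {z : K}, z ∈ Om → n • z ∈ Om := fun n {z} hz =>
    (Subalgebra.toSubmodule Om).smul_mem n hz
  have hx₀Om : (x : K) ∈ Om := x.2
  have hx₀O : (x : K) ∉ O := fun h => hxS ((hmemS x).mpr h)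
  have hpx₀ : (p : K) * (x : K) ∈ O := by
    have h1 : (((p : ℤ) • x : Om) : K) ∈ O := (hmemS _).mp hpxS
    have h2 : (((p : ℤ) • x : Om) : K) = (p : K) * (x : K) := by
      push_cast [zsmul_eq_mul]
      ring
    rwa [h2] at h1
  -- the saturation submodule
  obtain ⟨Sat, hSatmem⟩ : ∃ Sat : Submodule ℤ K,
      ∀ z : K, z ∈ Sat ↔ z ∈ Om ∧ ∃ k : ℕ, (p : K) ^ k * z ∈ O := by
    refine ⟨{ carrier := {z : K | z ∈ Om ∧ ∃ k : ℕ, (p : K) ^ k * z ∈ O},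
              add_mem' := ?_,
              zero_mem' := ⟨zero_mem _, 0, by simpa using zero_mem O⟩,
              smul_mem' := ?_ }, fun z => Iff.rfl⟩
    · rintro a b ⟨haOm, k, hk⟩ ⟨hbOm, l, hl⟩
      refine ⟨add_mem haOm hbOm, k + l, ?_⟩
      have h1 : (p : K) ^ (k + l) * (a + b)
          = (p : K) ^ l * ((p : K) ^ k * a) + (p : K) ^ k * ((p : K) ^ l * b) := by
        ring
      rw [h1]
      exact add_mem (mul_mem (hpowO l) hk) (mul_mem (hpowO k) hl)
    · rintro n a ⟨haOm, k, hk⟩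
      refine ⟨hOmsmul n haOm, k, ?_⟩
      rw [mul_smul_comm]
      exact hOsmul n hk
  have hOSat : ∀ {z : K}, z ∈ O → z ∈ Sat := fun {z} hz =>
    (hSatmem z).mpr ⟨hm hz, 0, by simpa using hz⟩
  have hSatmul : ∀ {u v : K}, u ∈ Sat → v ∈ Sat → u * v ∈ Sat := by
    intro u v hu hv
    obtain ⟨huOm, k, hk⟩ := (hSatmem u).mp hu
    obtain ⟨hvOm, l, hl⟩ := (hSatmem v).mp hv
    refine (hSatmem _).mpr ⟨mul_mem huOm hvOm, k + l, ?_⟩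
    have h1 : (p : K) ^ (k + l) * (u * v) = ((p : K) ^ k * u) * ((p : K) ^ l * v) := by ring
    rw [h1]
    exact mul_mem hk hl
  have hOSatmul : ∀ {a u : K}, a ∈ O → u ∈ Sat → a * u ∈ Sat := fun {a u} ha hu =>
    hSatmul (hOSat ha) hu
  -- Sat is finitely generated
  have hSatFG : Sat.FG := by
    have hle : Sat ≤ LinearMap.range (Om.val.toLinearMap) := by
      intro z hz
      exact ⟨⟨z, ((hSatmem z).mp hz).1⟩, rfl⟩
    have h1 := Submodule.map_comap_eq_of_le hle
    rw [← h1]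
    exact Submodule.FG.map _ (IsNoetherian.noetherian _)
  -- a uniform exponent
  have hmono : ∀ (k k' : ℕ) (z : K), k ≤ k' → (p : K) ^ k * z ∈ O → (p : K) ^ k' * z ∈ O := by
    intro k k' z hkk h
    have h1 : (p : K) ^ k' * z = (p : K) ^ (k' - k) * ((p : K) ^ k * z) := by
      rw [← mul_assoc, ← pow_add]
      congr 2
      omega
    rw [h1]
    exact mul_mem (hpowO _) h
  have hEex : ∃ e : ℕ, ∀ z ∈ Sat, (p : K) ^ e * z ∈ O := by
    obtain ⟨s, hs⟩ := hSatFG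
    classical
    set F : K → ℕ := fun g =>
      if h : ∃ k : ℕ, (p : K) ^ k * g ∈ O then Nat.find h else 0 with hF
    refine ⟨s.sup F, ?_⟩
    intro z hz
    rw [← hs] at hz
    induction hz using Submodule.span_induction with
    | mem g hg =>
      have hgSat : g ∈ Sat := hs ▸ Submodule.subset_span hg
      obtain ⟨-, hex⟩ := (hSatmem g).mp hgSat
      have h1 : (p : K) ^ (Nat.find hex) * g ∈ O := Nat.find_spec hex
      have h2 : Nat.find hex ≤ s.sup F := by
        have h3 : F g = Nat.find hex := dif_pos hex
        rw [← h3]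
        exact Finset.le_sup (by exact_mod_cast hg)
      exact hmono _ _ _ h2 h1
    | zero => simpa using zero_mem O
    | add a b _ _ ha hb =>
      rw [mul_add]
      exact add_mem ha hb
    | smul n a _ ha =>
      rw [mul_smul_comm]
      exact hOsmul n ha
  obtain ⟨E, hEspec, hEmin⟩ : ∃ E : ℕ, (∀ z ∈ Sat, (p : K) ^ E * z ∈ O) ∧
      ∀ E' : ℕ, E' < E → ¬ ∀ z ∈ Sat, (p : K) ^ E' * z ∈ O :=
    ⟨Nat.find hEex, Nat.find_spec hEex, fun E' hE' => Nat.find_min hEex hE'⟩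
  have hx₀Sat : (x : K) ∈ Sat := (hSatmem _).mpr ⟨hx₀Om, 1, by simpa using hpx₀⟩
  have hE1 : 1 ≤ E := by
    by_contra h
    have hE0 : E = 0 := by omega
    apply hx₀O
    simpa [hE0] using hEspec (x : K) hx₀Sat
  set c : K := (p : K) ^ (E - 1) with hc
  have hcO : c ∈ O := hpowO _
  have hpc : (p : K) * c = (p : K) ^ E := by
    rw [hc, mul_comm, ← pow_succ]
    congr 1
    omega
  -- the set W = O + c • Sat
  obtain ⟨W, hWmem⟩ : ∃ W : Set K,
      ∀ z : K, z ∈ W ↔ ∃ a ∈ (O : Set K), ∃ u ∈ Sat, z = a + c * u :=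
    ⟨{z : K | ∃ a ∈ (O : Set K), ∃ u ∈ Sat, z = a + c * u}, fun z => Iff.rfl⟩
  have hOW : ∀ {z : K}, z ∈ O → z ∈ W := fun {z} hz =>
    (hWmem z).mpr ⟨z, hz, 0, zero_mem Sat, by ring⟩
  have hWp : ∀ {z : K}, z ∈ W → (p : K) * z ∈ O := by
    intro z hz
    obtain ⟨a, ha, u, hu, rfl⟩ := (hWmem z).mp hz
    have h1 : (p : K) * (a + c * u) = (p : K) * a + (p : K) ^ E * u := by
      rw [mul_add, ← mul_assoc, hpc]
    rw [h1]
    exact add_mem (mul_mem hpO ha) (hEspec u hu)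
  have hWOmul : ∀ {a z : K}, a ∈ O → z ∈ W → a * z ∈ W := by
    intro a z ha hz
    obtain ⟨b, hb, u, hu, rfl⟩ := (hWmem z).mp hz
    exact (hWmem _).mpr ⟨a * b, mul_mem ha hb, a * u, hOSatmul ha hu, by ring⟩
  have hWmul : ∀ {z w : K}, z ∈ W → w ∈ W → z * w ∈ W := by
    intro z w hz hw
    obtain ⟨a, ha, u, hu, rfl⟩ := (hWmem z).mp hz
    obtain ⟨b, hb, v, hv, rfl⟩ := (hWmem w).mp hw
    refine (hWmem _).mpr ⟨a * b, mul_mem ha hb, a * v + b * u + c * (u * v), ?_, by ring⟩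
    exact add_mem (add_mem (hOSatmul ha hv) (hOSatmul hb hu))
      (hOSatmul hcO (hSatmul hu hv))
  have hWpow : ∀ {z : K}, z ∈ W → ∀ k : ℕ, z ^ k ∈ W := by
    intro z hz k
    induction k with
    | zero => simpa using hOW (one_mem O)
    | succ k ih =>
      rw [pow_succ]
      exact hWmul ih hz
  have hWne : ∃ y ∈ W, y ∉ O := by
    have h1 : ¬ ∀ z ∈ Sat, (p : K) ^ (E - 1) * z ∈ O := hEmin (E - 1) (by omega)
    push_neg at h1
    obtain ⟨u, hu, hnu⟩ := h1
    exact ⟨c * u, (hWmem _).mpr ⟨0, zero_mem O, u, hu, by ring⟩, hnu⟩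
  -- the radical ideal and its nilpotency exponent
  set I : Ideal O := (Ideal.span {(p : O)}).radical with hI
  haveI : IsNoetherian ℤ O := isNoetherian_of_linearEquiv eOS.symm
  haveI : IsNoetherianRing O := isNoetherianRing_iff.mpr (isNoetherian_of_tower ℤ inferInstance)
  obtain ⟨n, hn⟩ := Ideal.exists_radical_pow_le_of_fg (Ideal.span {(p : O)})
    (IsNoetherian.noetherian _)
  set m : ℕ := n + 1 with hmdef
  have hIm : I ^ m ≤ Ideal.span {(p : O)} :=
    le_trans (Ideal.pow_le_pow_right (Nat.le_succ n)) hn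
  -- descent
  have descent : ∀ N : ℕ, ∀ y : K, y ∈ W → y ∉ O →
      (∀ j : O, j ∈ I ^ N → (j : K) * y ∈ O) →
      ∃ y', y' ∈ W ∧ y' ∉ O ∧ ∀ i : O, i ∈ I → (i : K) * y' ∈ O := by
    intro N
    induction N with
    | zero =>
      intro y hyW hyO h
      have h1 : (1 : O) ∈ I ^ 0 := by
        rw [pow_zero, Ideal.one_eq_top]
        exact Submodule.mem_top
      have h2 := h 1 h1
      rw [OneMemClass.coe_one, one_mul] at h2
      exact absurd h2 hyO
    | succ N ih =>
      intro y hyW hyO h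
      by_cases hall : ∀ i : O, i ∈ I → (i : K) * y ∈ O
      · exact ⟨y, hyW, hyO, hall⟩
      · push_neg at hall
        obtain ⟨i₀, hi₀I, hi₀⟩ := hall
        refine ih ((i₀ : K) * y) (hWOmul i₀.2 hyW) hi₀ ?_
        intro j hj
        have hji : j * i₀ ∈ I ^ (N + 1) := by
          rw [pow_succ]
          exact Ideal.mul_mem_mul hj hi₀I
        have h1 := h (j * i₀) hji
        have h2 : ((j * i₀ : O) : K) * y = (j : K) * ((i₀ : K) * y) := by
          push_cast
          ring
        rwa [h2] at h1
  obtain ⟨y₀, hy₀W, hy₀O⟩ := hWne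
  have hinit : ∀ j : O, j ∈ I ^ m → (j : K) * y₀ ∈ O := by
    intro j hj
    have h1 : j ∈ Ideal.span {(p : O)} := hIm hj
    rw [Ideal.mem_span_singleton] at h1
    obtain ⟨d, hd⟩ := h1
    have h2 : (j : K) * y₀ = (d : K) * ((p : K) * y₀) := by
      rw [hd]
      push_cast
      ring
    rw [h2]
    exact mul_mem d.2 (hWp hy₀W)
  obtain ⟨y, hyW, hyO, hy⟩ := descent m y₀ hy₀W hy₀O hinit
  -- y is in the multiplier ring, hence in O: contradiction
  have hymem : y ∈ { x : K | ∀ i : O, i ∈ (Ideal.span {(p : O)}).radical →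
      ∃ j : O, j ∈ (Ideal.span {(p : O)}).radical ∧ (i : K) * x = (j : K) } := by
    intro i hi
    refine ⟨⟨(i : K) * y, hy i hi⟩, ?_, rfl⟩
    rw [Ideal.mem_radical_iff]
    refine ⟨2 * m, ?_⟩
    rw [Ideal.mem_span_singleton]
    have him : i ^ m ∈ Ideal.span {(p : O)} := hIm (Ideal.pow_mem_pow hi m)
    rw [Ideal.mem_span_singleton] at him
    obtain ⟨d₁, hd₁⟩ := him
    have hw : (p : K) * y ^ (2 * m) ∈ O := hWp (hWpow hyW (2 * m))
    refine ⟨d₁ ^ 2 * ⟨(p : K) * y ^ (2 * m), hw⟩, ?_⟩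
    apply Subtype.coe_injective
    have hiK : (i : K) ^ m = (p : K) * (d₁ : K) := by
      have := congrArg (Subtype.val : O → K) hd₁
      push_cast at this
      exact this
    push_cast
    calc ((i : K) * y) ^ (2 * m) = ((i : K) ^ m) ^ 2 * y ^ (2 * m) := by ring
      _ = ((p : K) * (d₁ : K)) ^ 2 * y ^ (2 * m) := by rw [hiK]
      _ = (p : K) * ((d₁ : K) ^ 2 * ((p : K) * y ^ (2 * m))) := by ring
  have : y ∈ (O : Set K) := by
    rw [heq]
    exact hymem
  exact hyO this
end

section
/- Let K be a commutative ring that is torsion-free as a ℤ-module, let T ∈ ℤ[X] be monic of degree n, and let 𝒪 ⊆ 𝒪_m be ℤ-subalgebras of K such that 𝒪 is isomorphic as a ℤ-algebra to ℤ[X]/⟨T⟩ (i.e., 𝒪 is obtained by adjoining a root of T), 𝒪_m is free and finite as a ℤ-module, and 𝒪 and 𝒪_m have equal ℤ-rank. Let p be a prime. Suppose T satisfies the Dedekind criterion at p: there exist f, g, h ∈ ℤ[X] and a, b, c ∈ F_p[X] such that ḡ is a radical part of T̄ (meaning ḡ is squarefree, ḡ divides T̄, and T̄ divides ḡ^k for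 some k ≥ 1), p·f = g·h − T, and a·f̄ + b·ḡ + c·h̄ = 1. Then p does not divide the cardinality of the quotient ℤ-module 𝒪_m / 𝒪. No irreducibility of T is assumed. -/
open Polynomial UniqueFactorizationMonoid

theorem my_exists_pow_dvd_not_dvd {α : Type*} [CommMonoidWithZero α]
    [NormalizationMonoid α] [UniqueFactorizationMonoid α] {h V : α}
    (hh : h ≠ 0) (hV : V ≠ 0) (hnd : ¬ h ∣ V) :
    ∃ (π : α) (s : ℕ), Prime π ∧ 1 ≤ s ∧ π ^ s ∣ h ∧ ¬ π ^ s ∣ V := by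
  classical
  rw [dvd_iff_normalizedFactors_le_normalizedFactors hh hV, Multiset.le_iff_count] at hnd
  push_neg at hnd
  obtain ⟨π, hcount⟩ := hnd
  have hmem : π ∈ normalizedFactors h :=
    Multiset.count_pos.mp (lt_of_le_of_lt (Nat.zero_le _) hcount)
  have hprime : Prime π := prime_of_normalized_factor π hmem
  have hnorm : normalize π = π := normalize_normalized_factor π hmem
  refine ⟨π, (normalizedFactors V).count π + 1, hprime, le_add_self, ?_, ?_⟩
  · rw [pow_dvd_iff_le_emultiplicity,
      emultiplicity_eq_count_normalizedFactors hprime.irreducible hh, hnorm]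
    exact_mod_cast hcount
  · rw [pow_dvd_iff_le_emultiplicity,
      emultiplicity_eq_count_normalizedFactors hprime.irreducible hV, hnorm]
    exact_mod_cast Nat.not_succ_le_self _

/-- **Dedekind's criterion implies `p`-maximality.** Let `K` be a `ℤ`-torsion-free
commutative ring, `T : ℤ[X]` monic, `𝒪 ≤ 𝒪m` subalgebras of `K` with `𝒪 ≅ ℤ[X]/⟨T⟩`,
`𝒪m` free and finite as a `ℤ`-module, and `𝒪` and `𝒪m` of equal `ℤ`-rank. If `T`
satisfies the Dedekind criterion at the prime `p`, then `p` does not divide the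
cardinality of the quotient `ℤ`-module `𝒪m / 𝒪`. No irreducibility of `T` is assumed. -/
theorem not_dvd_index_of_satisfiesDedekindCriterion
    {K : Type*} [CommRing K] [NoZeroSMulDivisors ℤ K]
    (T : Polynomial ℤ) (hT : T.Monic)
    (O Om : Subalgebra ℤ K) (hm : O ≤ Om)
    (hadj : IsAdjoinRoot O T)
    [Module.Free ℤ Om] [Module.Finite ℤ Om]
    (hrank : Module.rank ℤ O = Module.rank ℤ Om)
    (p : ℕ) (hp : p.Prime)
    (hded : ∃ (f g h : Polynomial ℤ) (a b c : Polynomial (ZMod p)),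
      (Squarefree (g.map (Int.castRingHom (ZMod p))) ∧
        g.map (Int.castRingHom (ZMod p)) ∣ T.map (Int.castRingHom (ZMod p)) ∧
        ∃ k : ℕ, 1 ≤ k ∧
          T.map (Int.castRingHom (ZMod p)) ∣ (g.map (Int.castRingHom (ZMod p))) ^ k) ∧
      C (p : ℤ) * f = g * h - T ∧
      a * f.map (Int.castRingHom (ZMod p)) + b * g.map (Int.castRingHom (ZMod p)) +
        c * h.map (Int.castRingHom (ZMod p)) = 1) :
    ¬ (p ∣ Nat.card
        (Om ⧸ Subalgebra.toSubmodule (Subalgebra.inclusion hm).range)) := by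
  classical
  intro hdvd
  haveI : Fact p.Prime := ⟨hp⟩
  set S : Submodule ℤ Om := Subalgebra.toSubmodule (Subalgebra.inclusion hm).range with hS
  -- trivial case : K is a subsingleton
  rcases subsingleton_or_nontrivial K with hK | hK
  · haveI : Subsingleton Om := ⟨fun x y => Subtype.ext (Subsingleton.elim _ _)⟩
    haveI : Subsingleton (Om ⧸ S) :=
      (Submodule.Quotient.mk_surjective S).subsingleton
    rw [Nat.card_of_subsingleton (0 : Om ⧸ S)] at hdvd
    exact hp.one_lt.ne' (Nat.dvd_one.mp hdvd)
  obtain ⟨f, g, h, a, b, c, ⟨hgsq, hgT, k, hk1, hTgk⟩, hpf, habc⟩ := hded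
  -- notation
  set ρ : ℤ →+* ZMod p := Int.castRingHom (ZMod p) with hρ
  set θ : K := (hadj.root : K) with hθ
  have hco : ∀ P : ℤ[X], aeval θ P = ((hadj.map P : O) : K) := by
    intro P
    rw [← hadj.aeval_root_eq_map]
    exact aeval_algHom_apply O.val hadj.root P
  -- membership in O
  have hmemO : ∀ x : K, x ∈ O ↔ ∃ P : ℤ[X], aeval θ P = x := by
    intro x
    constructor
    · intro hx
      obtain ⟨P, hP⟩ := hadj.map_surjective (⟨x, hx⟩ : O)
      exact ⟨P, by rw [hco P, hP]⟩
    · rintro ⟨P, rfl⟩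
      rw [hco P]
      exact SetLike.coe_mem _
  have hker : ∀ P : ℤ[X], aeval θ P = 0 ↔ T ∣ P := by
    intro P
    rw [hco P]
    constructor
    · intro hz
      have h0 : P ∈ RingHom.ker hadj.map := by
        rw [RingHom.mem_ker]; exact_mod_cast hz
      rwa [hadj.ker_map, Ideal.mem_span_singleton] at h0
    · intro hdvd'
      have h0 : P ∈ RingHom.ker hadj.map := by
        rw [hadj.ker_map, Ideal.mem_span_singleton]; exact hdvd'
      rw [RingHom.mem_ker] at h0
      rw [h0]; simp
  have hdiffθ : ∀ P Q : ℤ[X], aeval θ P = aeval θ Q ↔ T ∣ P - Q := by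
    intro P Q
    rw [← hker (P - Q), map_sub, sub_eq_zero]
  -- cancellation of p
  have hcan : ∀ x y : K, (p : K) * x = (p : K) * y → x = y := by
    intro x y hxy
    have hp0 : (p : ℤ) ≠ 0 := Int.natCast_ne_zero.mpr hp.ne_zero
    have : (p : ℤ) • x = (p : ℤ) • y := by
      rw [zsmul_eq_mul, zsmul_eq_mul]; push_cast; exact hxy
    exact smul_right_injective K hp0 this
  have hφC : aeval θ (C (p : ℤ)) = (p : K) := by
    rw [aeval_C, algebraMap_int_eq, eq_intCast]; norm_cast
  -- reduction mod p
  have hred0 : ∀ P : ℤ[X], P.map ρ = 0 ↔ C (p : ℤ) ∣ P := by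
    intro P
    rw [C_dvd_iff_dvd_coeff, Polynomial.ext_iff]
    apply forall_congr'
    intro i
    rw [coeff_map, coeff_zero]
    exact_mod_cast ZMod.intCast_zmod_eq_zero_iff_dvd (P.coeff i) p
  have hsurjρ : Function.Surjective (Polynomial.map ρ : ℤ[X] → (ZMod p)[X]) :=
    Polynomial.map_surjective ρ ZMod.intCast_surjective
  -- key A : nilpotency
  have keyA : ∀ β : K, β ∈ Om → ∀ U : ℤ[X], (p : K) * β = aeval θ U →
      g.map ρ ∣ U.map ρ := by
    intro β hβ U hU
    haveI : Algebra.IsIntegral ℤ Om := Algebra.IsIntegral.of_finite ℤ Om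
    have hint : IsIntegral ℤ β := by
      have := Algebra.IsIntegral.isIntegral (R := ℤ) (⟨β, hβ⟩ : Om)
      exact this.map Om.val
    obtain ⟨Z, hZm, hZ0⟩ := hint
    have hZ0' : aeval β Z = 0 := hZ0
    set m := Z.natDegree with hmdef
    have hm : m ≠ 0 := by
      intro hm0
      have : Z = 1 := hZm.natDegree_eq_zero.mp hm0
      rw [this] at hZ0'
      simp at hZ0'
    have hZ' : aeval ((p : K) * β) (Z.scaleRoots (p : ℤ)) = 0 := by
      have := scaleRoots_aeval_eq_zero (r := (p : ℤ)) hZ0'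
      rwa [algebraMap_int_eq, eq_intCast, Int.cast_natCast] at this
    rw [hU, ← aeval_comp] at hZ'
    have hTdvd : T ∣ (Z.scaleRoots (p : ℤ)).comp U := (hker _).mp hZ'
    have hmapZ' : (Z.scaleRoots (p : ℤ)).map ρ = X ^ m := by
      ext i
      rw [coeff_map, coeff_scaleRoots, coeff_X_pow]
      rcases lt_trichotomy i m with hi | hi | hi
      · have : (p : ℤ) ∣ Z.coeff i * (p : ℤ) ^ (m - i) :=
          Dvd.dvd.mul_left (dvd_pow_self _ (Nat.sub_ne_zero_of_lt hi)) _
        obtain ⟨d, hd⟩ := this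
        rw [hd, if_neg hi.ne]
        simp [ZMod.natCast_self]
      · subst hi
        rw [if_pos rfl, Nat.sub_self, pow_zero, mul_one]
        have : Z.coeff Z.natDegree = 1 := hZm
        rw [this]; simp
      · rw [if_neg hi.ne', coeff_eq_zero_of_natDegree_lt hi]
        simp
    have hTU : T.map ρ ∣ (U.map ρ) ^ m := by
      have := Polynomial.map_dvd ρ hTdvd
      rwa [Polynomial.map_comp, hmapZ', X_pow_comp] at this
    exact (hgsq.dvd_pow_iff_dvd hm).mp (dvd_trans hgT hTU)
  -- finiteness of the quotient
  have hSmem : ∀ y : Om, y ∈ S ↔ (y : K) ∈ O := by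
    intro y
    constructor
    · rintro ⟨x, rfl⟩
      exact SetLike.coe_mem x
    · intro hy
      exact ⟨⟨(y : K), hy⟩, Subtype.ext rfl⟩
  have hinj : Function.Injective (Subalgebra.inclusion hm) := Subalgebra.inclusion_injective hm
  have hrankS : Module.rank ℤ S = Module.rank ℤ Om := by
    rw [← hrank]
    have hre : S = LinearMap.range (Subalgebra.inclusion hm).toLinearMap := by
      ext y
      rw [hSmem y, LinearMap.mem_range]
      constructor
      · intro hy; exact ⟨⟨(y : K), hy⟩, Subtype.ext rfl⟩
      · rintro ⟨x, rfl⟩; exact SetLike.coe_mem x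
    rw [hre]
    exact (LinearEquiv.ofInjective (Subalgebra.inclusion hm).toLinearMap hinj).rank_eq.symm
  haveI hfinQ : Module.Finite ℤ (Om ⧸ S) :=
    Module.Finite.of_surjective S.mkQ (Submodule.Quotient.mk_surjective S)
  have hrankQ : Module.rank ℤ (Om ⧸ S) = 0 := by
    have hadd := rank_quotient_add_rank_of_isDomain (R := ℤ) S
    rw [hrankS] at hadd
    have hOmfin : Module.rank ℤ Om < Cardinal.aleph0 := Module.rank_lt_aleph0 ℤ Om
    have hQfin : Module.rank ℤ (Om ⧸ S) < Cardinal.aleph0 := Module.rank_lt_aleph0 ℤ _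
    have := congrArg Cardinal.toNat hadd
    rw [Cardinal.toNat_add hQfin hOmfin] at this
    have h0 : Cardinal.toNat (Module.rank ℤ (Om ⧸ S)) = 0 := by omega
    rcases Cardinal.toNat_eq_zero.mp h0 with h0' | h0'
    · exact h0'
    · exact absurd hQfin (not_lt.mpr h0')
  have htor : Module.IsTorsion ℤ (Om ⧸ S) := rank_eq_zero_iff_isTorsion.mp hrankQ
  haveI hQfinite : Finite (Om ⧸ S) := Module.finite_of_fg_torsion _ htor
  -- Cauchy : an element of order p
  haveI : Fintype (Om ⧸ S) := Fintype.ofFinite _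
  obtain ⟨q, hq⟩ := exists_prime_addOrderOf_dvd_card (G := Om ⧸ S) p
    (by rwa [← Nat.card_eq_fintype_card])
  have hq0 : q ≠ 0 := by
    intro h0
    rw [h0, addOrderOf_zero] at hq
    exact hp.ne_one hq.symm
  have hpq : p • q = 0 := by rw [← hq]; exact addOrderOf_nsmul_eq_zero q
  obtain ⟨β, rfl⟩ := Submodule.Quotient.mk_surjective S q
  have hβnS : β ∉ S := fun hx => hq0 ((Submodule.Quotient.mk_eq_zero S).mpr hx)
  have hpβS : (p • β) ∈ S := by
    rw [← Submodule.Quotient.mk_eq_zero S, Submodule.Quotient.mk_smul]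
    exact_mod_cast hpq
  -- translate to K
  set βK : K := (β : K) with hβK
  have hβOm : βK ∈ Om := SetLike.coe_mem β
  have hβO : βK ∉ O := by
    intro hx
    exact hβnS ((hSmem β).mpr hx)
  have hpβO : (p : K) * βK ∈ O := by
    have := (hSmem _).mp hpβS
    have hco2 : ((p • β : Om) : K) = (p : K) * βK := by
      push_cast
      ring
    rwa [hco2] at this
  obtain ⟨U0, hU0⟩ := (hmemO _).mp hpβO
  -- g(θ)^k ∈ p O
  obtain ⟨sb, hsb⟩ := hTgk
  obtain ⟨Sl, rfl⟩ := hsurjρ sb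
  have hgk : ∃ R : ℤ[X], g ^ k = T * Sl + C (p : ℤ) * R := by
    have : (g ^ k - T * Sl).map ρ = 0 := by
      rw [Polynomial.map_sub, Polynomial.map_pow, Polynomial.map_mul, ← hsb]
      ring
    obtain ⟨R, hR⟩ := (hred0 _).mp this
    exact ⟨R, by linear_combination hR⟩
  obtain ⟨R, hgkR⟩ := hgk
  have hφgk : aeval θ g ^ k = (p : K) * aeval θ R := by
    have h1 : aeval θ (g ^ k) = aeval θ (T * Sl) + aeval θ (C (p : ℤ) * R) := by
      rw [← map_add]; exact congrArg _ (by linear_combination hgkR)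
    rw [map_pow] at h1
    rw [h1, map_mul, map_mul, (hker T).mpr dvd_rfl, hφC]
    ring
  -- the descent
  have hPk : aeval θ g ^ k * βK ∈ O := by
    rw [hφgk]
    have : (p : K) * aeval θ R * βK = aeval θ R * ((p : K) * βK) := by ring
    rw [this, ← hU0, ← map_mul]
    exact (hmemO _).mpr ⟨R * U0, rfl⟩
  have hex : ∃ j : ℕ, aeval θ g ^ j * βK ∈ O := ⟨k, hPk⟩
  set t := Nat.find hex with ht
  have htspec : aeval θ g ^ t * βK ∈ O := Nat.find_spec hex
  have ht0 : t ≠ 0 := by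
    intro h0
    rw [h0, pow_zero, one_mul] at htspec
    exact hβO htspec
  obtain ⟨γ, hγOm, hγO, hγg, U, hγp⟩ :
      ∃ γ : K, γ ∈ Om ∧ γ ∉ O ∧ aeval θ g * γ ∈ O ∧
        ∃ U : ℤ[X], (p : K) * γ = aeval θ U := by
    refine ⟨aeval θ g ^ (t - 1) * βK, ?_, ?_, ?_, g ^ (t - 1) * U0, ?_⟩
    · refine mul_mem (pow_mem ?_ _) hβOm
      exact hm ((hmemO _).mpr ⟨g, rfl⟩)
    · exact Nat.find_min hex (Nat.sub_lt (Nat.pos_of_ne_zero ht0) one_pos)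
    · have he : aeval θ g * (aeval θ g ^ (t - 1) * βK) = aeval θ g ^ t * βK := by
        rw [← mul_assoc, ← pow_succ', Nat.sub_add_cancel (Nat.one_le_iff_ne_zero.mpr ht0)]
      rwa [he]
    · rw [map_mul, map_pow, hU0]
      ring
  obtain ⟨W, hW⟩ := (hmemO _).mp hγg
  -- the contradiction
  have hCp0 : (C ((p : ℤ)) : ℤ[X]).map ρ = 0 := by
    rw [Polynomial.map_C]
    have : ρ ((p : ℤ)) = 0 := by
      rw [hρ]
      simp
    rw [this, map_zero]
  have hTbar : T.map ρ = g.map ρ * h.map ρ := by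
    have h1 := congrArg (Polynomial.map ρ) hpf
    rw [Polynomial.map_mul, Polynomial.map_sub, Polynomial.map_mul, hCp0, zero_mul] at h1
    linear_combination h1
  have hc1 : g.map ρ ∣ U.map ρ := keyA γ hγOm U hγp
  have hδ : (p : K) * (aeval θ R * γ ^ k) = aeval θ (W ^ k) := by
    rw [map_pow, hW, mul_pow, hφgk]
    ring
  have hδOm : aeval θ R * γ ^ k ∈ Om :=
    mul_mem (hm ((hmemO _).mpr ⟨R, rfl⟩)) (pow_mem hγOm k)
  have hc2 : g.map ρ ∣ W.map ρ := by
    have hh2 := keyA _ hδOm _ hδ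
    rw [Polynomial.map_pow] at hh2
    exact (hgsq.dvd_pow_iff_dvd (Nat.one_le_iff_ne_zero.mp hk1)).mp hh2
  have hc4 : T.map ρ ∣ U.map ρ * f.map ρ - W.map ρ * h.map ρ := by
    have hghT : aeval θ (g * h) = (p : K) * aeval θ f := by
      have he : g * h = C (p : ℤ) * f + T := by linear_combination -hpf
      rw [he, map_add, map_mul, hφC, (hker T).mpr dvd_rfl, add_zero]
    have hc4K : aeval θ (U * f) = aeval θ (W * h) := by
      rw [map_mul, map_mul, ← hγp, hW]
      calc (p : K) * γ * aeval θ f = γ * ((p : K) * aeval θ f) := by ring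
        _ = γ * (aeval θ g * aeval θ h) := by rw [← hghT, map_mul]
        _ = aeval θ g * γ * aeval θ h := by ring
    have hd := Polynomial.map_dvd ρ ((hdiffθ _ _).mp hc4K)
    rwa [Polynomial.map_sub, Polynomial.map_mul, Polynomial.map_mul] at hd
  have hc5 : ¬ T.map ρ ∣ U.map ρ := by
    intro hdT
    obtain ⟨sb2, hsb2⟩ := hdT
    obtain ⟨S1, rfl⟩ := hsurjρ sb2
    have h0 : (U - T * S1).map ρ = 0 := by
      rw [Polynomial.map_sub, Polynomial.map_mul, hsb2]
      ring
    obtain ⟨U1, hU1⟩ := (hred0 _).mp h0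
    have hUe : aeval θ U = (p : K) * aeval θ U1 := by
      have : U = T * S1 + C (p : ℤ) * U1 := by linear_combination hU1
      rw [this, map_add, map_mul, map_mul, (hker T).mpr dvd_rfl, hφC]
      ring
    have : γ = aeval θ U1 := hcan _ _ (by rw [hγp, hUe])
    exact hγO (this ▸ (hmemO _).mpr ⟨U1, rfl⟩)
  -- UFD endgame
  have hTb0 : T.map ρ ≠ 0 := (hT.map ρ).ne_zero
  have hhb0 : h.map ρ ≠ 0 := by
    intro h0
    rw [hTbar, h0, mul_zero] at hTb0
    exact hTb0 rfl
  obtain ⟨Vb, hVb⟩ := hc1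
  have hUb0 : U.map ρ ≠ 0 := fun h0 => hc5 (h0 ▸ dvd_zero _)
  have hVb0 : Vb ≠ 0 := by
    intro h0
    rw [hVb, h0, mul_zero] at hUb0
    exact hUb0 rfl
  have hnhV : ¬ h.map ρ ∣ Vb := by
    intro hd
    exact hc5 (by rw [hVb, hTbar]; exact mul_dvd_mul_left _ hd)
  obtain ⟨π, s, hπ, hs1, hπh, hπV⟩ := my_exists_pow_dvd_not_dvd hhb0 hVb0 hnhV
  have hπhb : π ∣ h.map ρ := dvd_trans (dvd_pow_self π (Nat.one_le_iff_ne_zero.mp hs1)) hπh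
  have hTgb : T.map ρ ∣ (g.map ρ) ^ k := ⟨Sl.map ρ, hsb⟩
  have hπgb : π ∣ g.map ρ :=
    hπ.dvd_of_dvd_pow (dvd_trans (dvd_trans hπhb ⟨g.map ρ, by rw [hTbar]; ring⟩) hTgb)
  have hπf : ¬ π ∣ f.map ρ := by
    intro hd
    have h1 : π ∣ (a * f.map ρ + b * g.map ρ + c * h.map ρ) :=
      dvd_add (dvd_add (hd.mul_left a) (hπgb.mul_left b)) (hπhb.mul_left c)
    rw [habc] at h1
    exact hπ.not_unit (isUnit_of_dvd_one h1)
  obtain ⟨g1, hg1⟩ := hπgb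
  have hπg1 : ¬ π ∣ g1 := by
    intro hd
    obtain ⟨d, hd'⟩ := hd
    exact hπ.not_unit (hgsq π ⟨d, by rw [hg1, hd']; ring⟩)
  have hfin1 : π ^ (1 + s) ∣ U.map ρ * f.map ρ := by
    have h1 : π ^ (1 + s) ∣ T.map ρ := by
      rw [pow_add, pow_one, hTbar, hg1]
      exact mul_dvd_mul (Dvd.intro g1 rfl) hπh
    have h2 : π ^ (1 + s) ∣ W.map ρ * h.map ρ := by
      rw [pow_add, pow_one]
      exact mul_dvd_mul (dvd_trans ⟨g1, hg1⟩ hc2) hπh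
    have h3 := dvd_add (dvd_trans h1 hc4) h2
    rwa [sub_add_cancel] at h3
  have hfin2 : π ^ (1 + s) ∣ U.map ρ := hπ.pow_dvd_of_dvd_mul_right _ hπf hfin1
  have hfin3 : π ^ s ∣ g1 * Vb := by
    have he : U.map ρ = π * (g1 * Vb) := by rw [hVb, hg1]; ring
    rw [he, pow_add, pow_one] at hfin2
    exact (mul_dvd_mul_iff_left hπ.ne_zero).mp hfin2
  exact hπV (hπ.pow_dvd_of_dvd_mul_left _ hπg1 hfin3)
end

section
/- Let K be a commutative ring that is torsion-free as a ℤ-module, let 𝒪 be a ℤ-subalgebra of K, let p be a prime number, and let I_p be the radical of the principal ideal p𝒪 of 𝒪. Suppose that for every α ∈ 𝒪 with the property that α·β ∈ p·I_p for all β ∈ I_p, one has α ∈ p𝒪 (i.e., the kernel of the F_p-linear map 𝒪/p𝒪 → End(I_p/pI_p) sending ᾱ to multiplication by α is trivial). Then 𝒪 equals the multiplier ring of I_p, that is, every x ∈ K with x·I_p ⊆ I_p (meaning: for every i ∈ I_p there exists j ∈ I_p with i·x = j in K) lies in 𝒪. -/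
/-- If the `F_p`-linear map `𝒪/p𝒪 → End(Ip/pIp)` sending `ᾱ` to multiplication by `α`
has trivial kernel (i.e. `α·β ∈ p·Ip` for all `β ∈ Ip` implies `α ∈ p𝒪`), then `𝒪`
equals the multiplier ring of `Ip`: every `x ∈ K` with `x·Ip ⊆ Ip` lies in `𝒪`.
Here `Ip` is the radical of the ideal `p𝒪` and `K` is `ℤ`-torsion-free. -/
theorem mem_of_mul_radical_le_radical
    {K : Type*} [CommRing K] [NoZeroSMulDivisors ℤ K]
    (O : Subalgebra ℤ K) (p : ℕ) (hp : p.Prime)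
    (Ip : Ideal O) (hIp : Ip = (Ideal.span {(p : O)}).radical)
    (hker : ∀ α : O, (∀ β : O, β ∈ Ip → ∃ γ ∈ Ip, α * β = (p : O) * γ) →
      α ∈ Ideal.span {(p : O)}) :
    ∀ x : K, (∀ i : O, i ∈ Ip → ∃ j : O, j ∈ Ip ∧ (i : K) * x = (j : K)) → x ∈ O := by
  intro x hx
  have hpIp : (p : O) ∈ Ip := by
    rw [hIp]
    exact Ideal.le_radical (Ideal.subset_span rfl)
  obtain ⟨j, hj, hjx⟩ := hx (p : O) hpIp
  push_cast at hjx
  have hj_ker : ∀ β : O, β ∈ Ip → ∃ γ ∈ Ip, j * β = (p : O) * γ := by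
    intro β hβ
    obtain ⟨γ, hγ, hβγ⟩ := hx β hβ
    refine ⟨γ, hγ, Subtype.ext ?_⟩
    push_cast
    rw [← hjx, ← hβγ]
    ring
  obtain ⟨y, hy⟩ := Ideal.mem_span_singleton'.mp (hker j hj_ker)
  -- hy : y * p = j
  have hpx : (p : K) * x = (p : K) * (y : K) := by
    rw [hjx, ← hy]; push_cast; ring
  have hp0 : (p : ℤ) ≠ 0 := by exact_mod_cast hp.ne_zero
  have : (p : ℤ) • x = (p : ℤ) • (y : K) := by
    simpa [zsmul_eq_mul] using hpx
  have hxy : x = (y : K) := smul_right_injective K hp0 this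
  rw [hxy]; exact y.2
end

section
/- Let 𝒪 be a commutative ring that is free of finite rank r as a ℤ-module, let p be a prime number, and let j be a natural number with r ≤ p^j. Then for every x ∈ 𝒪: x^(p^j) ∈ p𝒪 if and only if x belongs to the radical of the ideal p𝒪 (i.e., x^m ∈ p𝒪 for some m ≥ 1). Equivalently, the kernel of the iterated Frobenius map x̄ ↦ x̄^(p^j) on 𝒪/p𝒪 equals the image of the radical of p𝒪 under the quotient map. -/
/-- Let `𝒪` be a commutative ring that is free of finite rank `r` as a `ℤ`-module,
`p` a prime, and `j` with `r ≤ p ^ j`. Then for every `x ∈ 𝒪`, we have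
`x ^ (p ^ j) ∈ p𝒪` if and only if `x` lies in the radical of `p𝒪`; equivalently, the
kernel of the iterated Frobenius on `𝒪/p𝒪` is the image of the radical of `p𝒪`. -/
theorem pow_mem_span_iff_mem_radical
    (O : Type*) [CommRing O] [Module.Free ℤ O] [Module.Finite ℤ O]
    (r : ℕ) (hr : Module.finrank ℤ O = r)
    (p : ℕ) (hp : p.Prime) (j : ℕ) (hj : r ≤ p ^ j) :
    ∀ x : O, x ^ (p ^ j) ∈ Ideal.span {(p : O)} ↔
      x ∈ (Ideal.span {(p : O)}).radical := by
  intro x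
  set I : Ideal O := Ideal.span {(p : O)} with hI
  constructor
  · intro h
    exact ⟨p ^ j, h⟩
  · rintro hx
    by_cases hu : IsUnit (p : O)
    · have : I = ⊤ := Ideal.span_singleton_eq_top.mpr hu
      simp [this]
    -- set up the quotient ring as a `ZMod p`-algebra
    haveI : Fact p.Prime := ⟨hp⟩
    obtain ⟨m, hm⟩ := hx
    set R := O ⧸ I
    haveI hchar : CharP R p := CharP.quotient O p hu
    letI : Algebra (ZMod p) R := ZMod.algebra R p
    have hπ : Function.Surjective (Ideal.Quotient.mk I) := Ideal.Quotient.mk_surjective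
    haveI : Module.Finite ℤ R :=
      Module.Finite.of_surjective (Ideal.Quotient.mkₐ ℤ I).toLinearMap hπ
    haveI : Module.Finite (ZMod p) R := Module.Finite.of_restrictScalars_finite ℤ (ZMod p) R
    -- the images of a ℤ-basis of O span R over ZMod p, so finrank ≤ r
    obtain ⟨n, b⟩ := Module.Free.exists_basis (R := ℤ) (M := O)
    haveI : Fintype n := Module.Free.ChooseBasisIndex.fintype ℤ O |>.ofEquiv _
      (b.indexEquiv (Module.Free.chooseBasis ℤ O)).symm
    have hcard : Fintype.card n = r := by
      rw [← hr, Module.finrank_eq_card_basis b]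
    have hspan : Submodule.span (ZMod p) (Set.range fun i => Ideal.Quotient.mk I (b i)) = ⊤ := by
      rw [Submodule.eq_top_iff']
      intro y
      obtain ⟨z, rfl⟩ := hπ y
      have hz : z ∈ Submodule.span ℤ (Set.range b) := by
        rw [b.span_eq]; trivial
      have : Ideal.Quotient.mk I z ∈
          Submodule.span ℤ (Set.range fun i => Ideal.Quotient.mk I (b i)) := by
        have := Submodule.apply_mem_span_image_of_mem_span
          (Ideal.Quotient.mkₐ ℤ I).toLinearMap hz
        simpa [← Set.range_comp, Function.comp_def] using this
      refine Submodule.span_le_restrictScalars ℤ (ZMod p) _ ?_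
      exact this
    have hfr : Module.finrank (ZMod p) R ≤ r := by
      rw [← hcard]
      exact finrank_le_of_span_eq_top hspan
    -- nilpotency: multiplication by the image of x
    set y : R := Ideal.Quotient.mk I x
    have hym : y ^ m = 0 := by
      rw [← map_pow, Ideal.Quotient.eq_zero_iff_mem]; exact hm
    set f : Module.End (ZMod p) R := LinearMap.mulLeft (ZMod p) y
    have hfpow : ∀ k : ℕ, (f ^ k) 1 = y ^ k := by
      intro k
      rw [LinearMap.pow_mulLeft, LinearMap.mulLeft_apply, mul_one]
    have h1 : (1 : R) ∈ LinearMap.ker (f ^ m) := by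
      rw [LinearMap.mem_ker, hfpow, hym]
    have h2 : (1 : R) ∈ LinearMap.ker (f ^ Module.finrank (ZMod p) R) :=
      Module.End.ker_pow_le_ker_pow_finrank f m h1
    have h3 : (1 : R) ∈ LinearMap.ker (f ^ (p ^ j)) := by
      have hle : Module.finrank (ZMod p) R ≤ p ^ j := hfr.trans hj
      rw [← Nat.sub_add_cancel hle, pow_add, Module.End.mul_eq_comp]
      exact LinearMap.ker_le_ker_comp _ _ h2
    have : y ^ (p ^ j) = 0 := by rw [← hfpow]; exact h3
    rwa [← map_pow, Ideal.Quotient.eq_zero_iff_mem] at this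
end

section
/- Let R be an integral domain and let f, g ∈ R[X] be polynomials of degree n and m respectively which split completely: f = a_n·∏_{i=1}^{n} (X − α_i) and g = b_m·∏_{j=1}^{m} (X − β_j), where a_n and b_m are the (nonzero) leading coefficients. Then Res(f, g) = (−1)^(n·m) · a_n^m · b_m^n · ∏_{i=1}^{n} ∏_{j=1}^{m} (α_i − β_j). -/
/-! `sylvester f g` is Mathlib's `Polynomial.sylvester g f`, transposed and with the order of its
rows and of its columns reversed by the same permutation, so `resultant f g` equals
`Polynomial.resultant g f = (-1)^(nm) Polynomial.resultant f g`. Mathlib's resultant is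
multiplicative in its first argument and `Res(X - α, g) = g(α)`, which turns
`Res(a ∏ (X - αᵢ), g)` into `aᵐ ∏ g(αᵢ) = aᵐ bⁿ ∏ (αᵢ - βⱼ)`. -/

open Polynomial

variable {R : Type*} [CommRing R]

/-- The Sylvester matrix of `f` and `g`: a square matrix of size
`deg f + deg g`, whose first `deg f` rows contain the (shifted) coefficients of `g`
and whose remaining `deg g` rows contain the (shifted) coefficients of `f`. -/
def sylvester (f g : Polynomial R) :
    Matrix (Fin (f.natDegree + g.natDegree)) (Fin (f.natDegree + g.natDegree)) R :=
  Matrix.of fun i j =>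
    if (i : ℕ) < f.natDegree then
      if (i : ℕ) ≤ (j : ℕ) ∧ (j : ℕ) ≤ (i : ℕ) + g.natDegree then
        g.coeff ((i : ℕ) + g.natDegree - (j : ℕ))
      else 0
    else
      if ((i : ℕ) - f.natDegree) ≤ (j : ℕ) ∧
          (j : ℕ) ≤ ((i : ℕ) - f.natDegree) + f.natDegree then
        f.coeff (((i : ℕ) - f.natDegree) + f.natDegree - (j : ℕ))
      else 0

/-- The resultant of two polynomials: the determinant of their Sylvester matrix. -/
def resultant (f g : Polynomial R) : R := (_root_.sylvester f g).det

theorem sylvester_eq_polynomialSylvester_transpose_submatrix (f g : R[X]) :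
    _root_.sylvester f g =
      (Polynomial.sylvester g f g.natDegree f.natDegree).transpose.submatrix
        (Fin.revPerm.trans (finCongr (add_comm _ _)))
        (Fin.revPerm.trans (finCongr (add_comm _ _))) := by
  ext i j
  simp only [_root_.sylvester, Polynomial.sylvester, Matrix.of_apply, Matrix.submatrix_apply,
    Matrix.transpose_apply, Fin.addCases, Equiv.trans_apply, Fin.revPerm_apply, finCongr_apply,
    Fin.val_cast, Fin.val_rev, Fin.val_castLT, Fin.val_subNat, Set.mem_Icc, eq_rec_constant]
  have := i.isLt
  have := j.isLt
  split_ifs <;> first | rfl | omega | (congr 1; omega)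

theorem resultant_eq_polynomialResultant_swap (f g : R[X]) :
    _root_.resultant f g = Polynomial.resultant g f := by
  rw [_root_.resultant, sylvester_eq_polynomialSylvester_transpose_submatrix,
    Matrix.det_submatrix_equiv_self, Matrix.det_transpose, Polynomial.resultant]

namespace Polynomial

theorem natDegree_C_mul_prod_X_sub_C {ι : Type*} (s : Finset ι) {a : R} (ha : a ≠ 0)
    (α : ι → R) : (C a * ∏ i ∈ s, (X - C (α i))).natDegree = s.card := by
  have : Nontrivial R := ⟨⟨a, 0, ha⟩⟩
  rw [natDegree_C_mul_of_mul_ne_zero (by simpa [(monic_prod_X_sub_C α s).leadingCoeff]),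
    natDegree_finsetProd_X_sub_C_eq_card]

theorem resultant_C_mul_prod_X_sub_C_left {ι : Type*} (s : Finset ι) (a : R) (α : ι → R)
    (g : R[X]) (m : ℕ) (hg : g.natDegree ≤ m) :
    (C a * ∏ i ∈ s, (X - C (α i))).resultant g s.card m =
      a ^ m * ∏ i ∈ s, g.eval (α i) := by
  nontriviality R
  rw [resultant_C_mul_left, ← natDegree_finsetProd_X_sub_C_eq_card s α,
    resultant_prod_left _ _ _ _ (by simp) hg]
  simp [hg]

end Polynomial

theorem resultant_eq_prod_roots_general {R : Type*} [CommRing R]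
    (n m : ℕ) (a b : R) (ha : a ≠ 0) (hb : b ≠ 0)
    (α : Fin n → R) (β : Fin m → R) (f g : Polynomial R)
    (hf : f = C a * ∏ i, (X - C (α i)))
    (hg : g = C b * ∏ j, (X - C (β j))) :
    _root_.resultant f g = (-1) ^ (n * m) * a ^ m * b ^ n * ∏ i, ∏ j, (α i - β j) := by
  have hfn : f.natDegree = n := by rw [hf, natDegree_C_mul_prod_X_sub_C _ ha, Finset.card_fin]
  have hgm : g.natDegree = m := by rw [hg, natDegree_C_mul_prod_X_sub_C _ hb, Finset.card_fin]
  have hres := resultant_C_mul_prod_X_sub_C_left Finset.univ a α g m hgm.le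
  rw [Finset.card_fin, ← hf] at hres
  have hgα : ∀ i, g.eval (α i) = b * ∏ j, (α i - β j) := fun i => by simp [hg, eval_prod]
  rw [resultant_eq_polynomialResultant_swap, hfn, hgm, resultant_comm, hres]
  simp only [hgα, Finset.prod_mul_distrib, Finset.prod_const, Finset.card_univ, Fintype.card_fin]
  ring

/-- If `f = a_n ∏ (X - α i)` and `g = b_m ∏ (X - β j)` split completely, with nonzero
leading coefficients `a_n`, `b_m`, then
`Res(f, g) = (-1)^(n m) * a_n^m * b_m^n * ∏ i ∏ j (α i - β j)`. -/
theorem resultant_eq_prod_roots {R : Type*} [CommRing R] [IsDomain R]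
    (n m : ℕ) (a b : R) (ha : a ≠ 0) (hb : b ≠ 0)
    (α : Fin n → R) (β : Fin m → R) (f g : Polynomial R)
    (hf : f = C a * ∏ i, (X - C (α i)))
    (hg : g = C b * ∏ j, (X - C (β j))) :
    _root_.resultant f g = (-1) ^ (n * m) * a ^ m * b ^ n * ∏ i, ∏ j, (α i - β j) :=
  resultant_eq_prod_roots_general n m a b ha hb α β f g hf hg
end

section
/- Let T ∈ ℤ[X] be monic, let a, b ∈ ℤ[X] and N a nonzero integer with a·T + b·T′ = N, where T′ is the formal derivative of T. If p is a prime not dividing N, then T satisfies the Dedekind criterion at p: there exist f, g, h ∈ ℤ[X] and a′, b′, c′ ∈ F_p[X] such that ḡ is a radical part of T̄ (ḡ is squarefree, ḡ divides T̄, and T̄ divides ḡ^k for some k ≥ 1), p·f = g·h − T, and a′·f̄ + b′·ḡ + c′·h̄ = 1. -/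
open Polynomial

/-- If `T : ℤ[X]` is monic and `a·T + b·T' = N` for a nonzero integer `N`, then for any
prime `p` not dividing `N`, `T` satisfies the Dedekind criterion at `p`: there are
`f, g, h : ℤ[X]` and `a', b', c' : F_p[X]` with `ḡ` a radical part of `T̄` (`ḡ` is
squarefree, `ḡ ∣ T̄` and `T̄ ∣ ḡ^k` for some `k ≥ 1`), `p·f = g·h - T`, and
`a'·f̄ + b'·ḡ + c'·h̄ = 1`. -/
theorem satisfiesDedekindCriterion_of_not_dvd
    (T : Polynomial ℤ) (hT : T.Monic)
    (a b : Polynomial ℤ) (N : ℤ) (hN : N ≠ 0)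
    (habT : a * T + b * derivative T = C N)
    (p : ℕ) (hp : p.Prime) (hpN : ¬ ((p : ℤ) ∣ N)) :
    ∃ (f g h : Polynomial ℤ) (a' b' c' : Polynomial (ZMod p)),
      (Squarefree (g.map (Int.castRingHom (ZMod p))) ∧
        g.map (Int.castRingHom (ZMod p)) ∣ T.map (Int.castRingHom (ZMod p)) ∧
        ∃ k : ℕ, 1 ≤ k ∧
          T.map (Int.castRingHom (ZMod p)) ∣ (g.map (Int.castRingHom (ZMod p))) ^ k) ∧
      C (p : ℤ) * f = g * h - T ∧
      a' * f.map (Int.castRingHom (ZMod p)) + b' * g.map (Int.castRingHom (ZMod p)) +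
        c' * h.map (Int.castRingHom (ZMod p)) = 1 := by
  haveI : Fact p.Prime := ⟨hp⟩
  have hNbar : ((N : ZMod p)) ≠ 0 := by
    rwa [Ne, ZMod.intCast_zmod_eq_zero_iff_dvd]
  have hsep : (T.map (Int.castRingHom (ZMod p))).Separable := by
    have := congrArg (Polynomial.map (Int.castRingHom (ZMod p))) habT
    simp only [Polynomial.map_add, Polynomial.map_mul, map_C, derivative_map] at this
    refine ⟨C (N : ZMod p)⁻¹ * a.map (Int.castRingHom (ZMod p)),
      C (N : ZMod p)⁻¹ * b.map (Int.castRingHom (ZMod p)), ?_⟩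
    rw [mul_assoc, mul_assoc, ← mul_add, derivative_map, this, ← C_mul]
    norm_num [inv_mul_cancel₀ hNbar]
  refine ⟨0, T, 1, 0, 0, 1, ⟨hsep.squarefree, dvd_refl _, 1, le_refl 1, by simp⟩, by simp, by simp⟩
end
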